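/- Let ε > 0 and suppose g(t) = h(t−ε) for all t ∈ ℝ and μ₁ = μ₃ (so that ν₁ = ν₂). Then C₁₂(Δ, −τ) = C₁₂(Δ, τ+ε) for every Δ > 0 and τ ∈ ℝ. Moreover, for every fixed Δ > 0, C₁₂(Δ, τ) → 0 as τ → ±∞; consequently, in this setting there exist Δ > 0 and τ ≠ 0 with C₁₂(Δ,τ) ≠ C₁₂(Δ,−τ) (a lead-lag effect), unless C₁₂ vanishes identically. -/

import Mathlib

/-!
Both measures in the definition of `C₁₂` are symmetric: `δ₀ + F + F̌ + F ⋆ F̌` about `0`, and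
`ν₂ ȟ + ν₁ g` about `ε / 2`, since `g` is `h` delayed by `ε` and `ν₁ = ν₂`. As `γ_Δ` is even, this
gives `C₁₂(Δ, -τ) = C₁₂(Δ, τ + ε)`. Both measures are finite (the Neumann series `F` converges in
`L¹` because `‖h ⋆ g‖₁ < 1`), so dominated convergence makes `C₁₂(Δ, ·)` vanish at `±∞`. If
`C₁₂(Δ, ·)` were even, it would be `ε`-periodic and vanishing at `+∞`, hence zero.
-/

open MeasureTheory Set Filter Topology

noncomputable section

/-- Convolution of two functions on `ℝ` (w.r.t. Lebesgue measure). -/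
def conv (f g : ℝ → ℝ) (t : ℝ) : ℝ := ∫ s, f (t - s) * g s

/-- `convPow f n = f^{⋆(n+1)}`, the `(n+1)`-fold convolution power of `f`. -/
def convPow (f : ℝ → ℝ) : ℕ → ℝ → ℝ
  | 0 => f
  | n + 1 => conv f (convPow f n)

/-- `F = Σ_{n ≥ 1} (h⋆g)^{⋆n}`. -/
def Ffun (h g : ℝ → ℝ) (t : ℝ) : ℝ := ∑' n, convPow (conv h g) n t

/-- `ν₁ = μ₁ + ‖h‖_{L¹} μ₃`. -/
def nu1 (h g : ℝ → ℝ) (μ1 μ3 : ℝ) : ℝ := μ1 + (∫ t, h t) * μ3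

/-- `ν₂ = μ₃ + ‖g‖_{L¹} μ₁`. -/
def nu2 (h g : ℝ → ℝ) (μ1 μ3 : ℝ) : ℝ := μ3 + (∫ t, g t) * μ1

/-- The measure `δ₀ + (F + F̌ + F⋆F̌)(t) dt` on `ℝ`. -/
def rhoMeas (h g : ℝ → ℝ) : Measure ℝ :=
  Measure.dirac 0 + volume.withDensity fun t =>
    ENNReal.ofReal
      (Ffun h g t + Ffun h g (-t) + conv (Ffun h g) (fun s => Ffun h g (-s)) t)

/-- The measure `ν₁ δ₀ + ν₂ (h⋆ȟ)(t) dt` on `ℝ`. -/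
def sigMeas11 (h g : ℝ → ℝ) (μ1 μ3 : ℝ) : Measure ℝ :=
  ENNReal.ofReal (nu1 h g μ1 μ3) • Measure.dirac 0 +
    volume.withDensity fun t =>
      ENNReal.ofReal (nu2 h g μ1 μ3 * conv h (fun s => h (-s)) t)

/-- The measure `(ν₂ ȟ + ν₁ g)(t) dt` on `ℝ`. -/
def sigMeas12 (h g : ℝ → ℝ) (μ1 μ3 : ℝ) : Measure ℝ :=
  volume.withDensity fun t =>
    ENNReal.ofReal (nu2 h g μ1 μ3 * h (-t) + nu1 h g μ1 μ3 * g t)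

/-- `γ_Δ(x) = (1 − |x|/Δ)⁺`. -/
def gamDelta (Δ x : ℝ) : ℝ := max (1 - |x| / Δ) 0

/-- `C₁₁(Δ,τ) = (2/(1−‖h‖₁‖g‖₁)) γ_Δ ⋆ (δ₀+F+F̌+F⋆F̌) ⋆ (ν₁δ₀ + ν₂ h⋆ȟ) (τ)`. -/
def C11 (h g : ℝ → ℝ) (μ1 μ3 Δ τ : ℝ) : ℝ :=
  (2 / (1 - (∫ t, h t) * (∫ t, g t))) *
    ∫ x, (∫ y, gamDelta Δ (τ - x - y) ∂(sigMeas11 h g μ1 μ3)) ∂(rhoMeas h g)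

/-- `C₁₂(Δ,τ) = (2/(1−‖h‖₁‖g‖₁)) γ_Δ ⋆ (δ₀+F+F̌+F⋆F̌) ⋆ (ν₂ ȟ + ν₁ g) (τ)`. -/
def C12 (h g : ℝ → ℝ) (μ1 μ3 Δ τ : ℝ) : ℝ :=
  (2 / (1 - (∫ t, h t) * (∫ t, g t))) *
    ∫ x, (∫ y, gamDelta Δ (τ - x - y) ∂(sigMeas12 h g μ1 μ3)) ∂(rhoMeas h g)

open scoped ENNReal

section Convolution

variable {f g : ℝ → ℝ}

theorem measurable_conv (hf : Measurable f) (hg : Measurable g) : Measurable (conv f g) :=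
  ((hf.comp (measurable_fst.sub measurable_snd)).mul
    (hg.comp measurable_snd)).stronglyMeasurable.integral_prod_right'.measurable

theorem conv_nonneg (hf : ∀ t, 0 ≤ f t) (hg : ∀ t, 0 ≤ g t) (t : ℝ) : 0 ≤ conv f g t :=
  integral_nonneg fun _ => mul_nonneg (hf _) (hg _)

theorem conv_comm (f g : ℝ → ℝ) (t : ℝ) : conv f g t = conv g f t := by
  rw [conv, conv, ← integral_sub_left_eq_self _ volume t]
  simp only [sub_sub_cancel, mul_comm]

theorem conv_neg (f g : ℝ → ℝ) (t : ℝ) :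
    conv f g (-t) = conv (fun x => f (-x)) (fun x => g (-x)) t := by
  rw [conv, conv, ← integral_neg_eq_self]
  simp only [neg_sub, sub_neg_eq_add, neg_add_eq_sub]

theorem ofReal_conv_le_lintegral (hf : ∀ t, 0 ≤ f t) (hg : ∀ t, 0 ≤ g t) (t : ℝ) :
    ENNReal.ofReal (conv f g t) ≤
      ∫⁻ s, ENNReal.ofReal (f (t - s)) * ENNReal.ofReal (g s) := by
  by_cases hI : Integrable (fun s => f (t - s) * g s)
  · rw [conv, ofReal_integral_eq_lintegral_ofReal hI
      (ae_of_all _ fun s => mul_nonneg (hf _) (hg _))]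
    exact (lintegral_congr fun s => ENNReal.ofReal_mul (hf _)).le
  · simp [conv, integral_undef hI]

theorem lintegral_ofReal_conv_le (hfm : Measurable f) (hgm : Measurable g)
    (hf : ∀ t, 0 ≤ f t) (hg : ∀ t, 0 ≤ g t) :
    ∫⁻ t, ENNReal.ofReal (conv f g t) ≤
      (∫⁻ t, ENNReal.ofReal (f t)) * ∫⁻ t, ENNReal.ofReal (g t) :=
  calc ∫⁻ t, ENNReal.ofReal (conv f g t)
      ≤ ∫⁻ t, ∫⁻ s, ENNReal.ofReal (f (t - s)) * ENNReal.ofReal (g s) :=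
        lintegral_mono fun t => ofReal_conv_le_lintegral hf hg t
    _ = ∫⁻ s, ∫⁻ t, ENNReal.ofReal (f (t - s)) * ENNReal.ofReal (g s) :=
        lintegral_lintegral_swap ((hfm.comp (measurable_fst.sub measurable_snd)).ennreal_ofReal.mul
          (hgm.comp measurable_snd).ennreal_ofReal).aemeasurable
    _ = ∫⁻ s, (∫⁻ t, ENNReal.ofReal (f t)) * ENNReal.ofReal (g s) := by
        refine lintegral_congr fun s => ?_
        rw [lintegral_mul_const _ (by fun_prop),
          lintegral_sub_right_eq_self (fun t => ENNReal.ofReal (f t)) s]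
    _ = _ := lintegral_const_mul _ hgm.ennreal_ofReal

theorem measurable_convPow (hf : Measurable f) : ∀ n, Measurable (convPow f n)
  | 0 => hf
  | n + 1 => measurable_conv hf (measurable_convPow hf n)

theorem convPow_nonneg (hf : ∀ t, 0 ≤ f t) : ∀ n t, 0 ≤ convPow f n t
  | 0, t => hf t
  | n + 1, t => conv_nonneg hf (convPow_nonneg hf n) t

theorem lintegral_ofReal_convPow_le (hfm : Measurable f) (hf : ∀ t, 0 ≤ f t) :
    ∀ n, ∫⁻ t, ENNReal.ofReal (convPow f n t) ≤ (∫⁻ t, ENNReal.ofReal (f t)) ^ (n + 1)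
  | 0 => by simp [convPow]
  | n + 1 =>
    calc ∫⁻ t, ENNReal.ofReal (convPow f (n + 1) t)
        ≤ (∫⁻ t, ENNReal.ofReal (f t)) * ∫⁻ t, ENNReal.ofReal (convPow f n t) :=
          lintegral_ofReal_conv_le hfm (measurable_convPow hfm n) hf (convPow_nonneg hf n)
      _ ≤ (∫⁻ t, ENNReal.ofReal (f t)) * (∫⁻ t, ENNReal.ofReal (f t)) ^ (n + 1) := by
          gcongr; exact lintegral_ofReal_convPow_le hfm hf n
      _ = (∫⁻ t, ENNReal.ofReal (f t)) ^ (n + 2) := by ring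

end Convolution

section Resolvent

variable {h g : ℝ → ℝ}

theorem Ffun_nonneg (hc : ∀ t, 0 ≤ conv h g t) (t : ℝ) : 0 ≤ Ffun h g t :=
  tsum_nonneg fun n => convPow_nonneg hc n t

theorem measurable_Ffun (hc : Measurable (conv h g)) : Measurable (Ffun h g) :=
  Measurable.tsum fun n => measurable_convPow hc n

theorem ofReal_Ffun_le_tsum (hc : ∀ t, 0 ≤ conv h g t) (t : ℝ) :
    ENNReal.ofReal (Ffun h g t) ≤ ∑' n, ENNReal.ofReal (convPow (conv h g) n t) := by
  by_cases hs : Summable fun n => convPow (conv h g) n t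
  · exact (ENNReal.ofReal_tsum_of_nonneg (fun n => convPow_nonneg hc n t) hs).le
  · simp [Ffun, tsum_eq_zero_of_not_summable hs]

theorem lintegral_ofReal_Ffun_lt_top (hcm : Measurable (conv h g)) (hc : ∀ t, 0 ≤ conv h g t)
    (hlt : ∫⁻ t, ENNReal.ofReal (conv h g t) < 1) :
    ∫⁻ t, ENNReal.ofReal (Ffun h g t) < ⊤ := by
  set I := ∫⁻ t, ENNReal.ofReal (conv h g t)
  calc ∫⁻ t, ENNReal.ofReal (Ffun h g t)
      ≤ ∫⁻ t, ∑' n, ENNReal.ofReal (convPow (conv h g) n t) :=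
        lintegral_mono (ofReal_Ffun_le_tsum hc)
    _ = ∑' n, ∫⁻ t, ENNReal.ofReal (convPow (conv h g) n t) :=
        lintegral_tsum fun n => (measurable_convPow hcm n).ennreal_ofReal.aemeasurable
    _ ≤ ∑' n : ℕ, I ^ n := by
        refine ENNReal.tsum_le_tsum fun n => ?_
        calc ∫⁻ t, ENNReal.ofReal (convPow (conv h g) n t) ≤ I ^ (n + 1) :=
              lintegral_ofReal_convPow_le hcm hc n
          _ ≤ I ^ n := by rw [pow_succ]; exact mul_le_of_le_one_right' hlt.le
    _ = (1 - I)⁻¹ := ENNReal.tsum_geometric I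
    _ < ⊤ := ENNReal.inv_lt_top.2 (tsub_pos_of_lt hlt)

theorem lintegral_ofReal_conv_lt_one (hm : Measurable h) (gm : Measurable g)
    (h0 : ∀ t, 0 ≤ h t) (g0 : ∀ t, 0 ≤ g t) (hint : Integrable h) (gint : Integrable g)
    (hlt : (∫ t, h t) * (∫ t, g t) < 1) :
    ∫⁻ t, ENNReal.ofReal (conv h g t) < 1 :=
  calc ∫⁻ t, ENNReal.ofReal (conv h g t)
      ≤ (∫⁻ t, ENNReal.ofReal (h t)) * ∫⁻ t, ENNReal.ofReal (g t) :=
        lintegral_ofReal_conv_le hm gm h0 g0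
    _ = ENNReal.ofReal ((∫ t, h t) * ∫ t, g t) := by
        rw [← ofReal_integral_eq_lintegral_ofReal hint (ae_of_all _ h0),
          ← ofReal_integral_eq_lintegral_ofReal gint (ae_of_all _ g0),
          ENNReal.ofReal_mul (integral_nonneg h0)]
    _ < 1 := ENNReal.ofReal_lt_one.2 hlt

theorem isFiniteMeasure_rhoMeas (hm : Measurable h) (gm : Measurable g)
    (h0 : ∀ t, 0 ≤ h t) (g0 : ∀ t, 0 ≤ g t) (hint : Integrable h) (gint : Integrable g)
    (hlt : (∫ t, h t) * (∫ t, g t) < 1) :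
    IsFiniteMeasure (rhoMeas h g) := by
  have hc0 := conv_nonneg h0 g0
  have hcm := measurable_conv hm gm
  set F := Ffun h g
  have hFm : Measurable F := measurable_Ffun hcm
  have hF0 : ∀ t, 0 ≤ F t := Ffun_nonneg hc0
  have hF_lt : ∫⁻ t, ENNReal.ofReal (F t) < ⊤ :=
    lintegral_ofReal_Ffun_lt_top hcm hc0 (lintegral_ofReal_conv_lt_one hm gm h0 g0 hint gint hlt)
  have hFneg : ∫⁻ t, ENNReal.ofReal (F (-t)) = ∫⁻ t, ENNReal.ofReal (F t) :=
    (Measure.measurePreserving_neg volume).lintegral_comp hFm.ennreal_ofReal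
  have hFF_lt : ∫⁻ t, ENNReal.ofReal (conv F (fun s => F (-s)) t) < ⊤ :=
    (lintegral_ofReal_conv_le hFm (hFm.comp measurable_neg) hF0 (fun t => hF0 _)).trans_lt
      (ENNReal.mul_lt_top hF_lt (hFneg ▸ hF_lt))
  have hdens_lt : ∫⁻ t, ENNReal.ofReal (F t + F (-t) + conv F (fun s => F (-s)) t) < ⊤ :=
    calc ∫⁻ t, ENNReal.ofReal (F t + F (-t) + conv F (fun s => F (-s)) t)
        ≤ ∫⁻ t, (ENNReal.ofReal (F t) + ENNReal.ofReal (F (-t))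
            + ENNReal.ofReal (conv F (fun s => F (-s)) t)) :=
          lintegral_mono fun t =>
            ENNReal.ofReal_add_le.trans (by gcongr; exact ENNReal.ofReal_add_le)
      _ = (∫⁻ t, ENNReal.ofReal (F t)) + (∫⁻ t, ENNReal.ofReal (F (-t)))
            + ∫⁻ t, ENNReal.ofReal (conv F (fun s => F (-s)) t) := by
          rw [lintegral_add_left (by fun_prop), lintegral_add_left (by fun_prop)]
      _ < ⊤ := by
          rw [hFneg]
          exact ENNReal.add_lt_top.2 ⟨ENNReal.add_lt_top.2 ⟨hF_lt, hF_lt⟩, hFF_lt⟩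
  have := isFiniteMeasure_withDensity (μ := volume) hdens_lt.ne
  rw [rhoMeas]
  infer_instance

theorem isFiniteMeasure_sigMeas12 (hint : Integrable h) (gint : Integrable g) (μ1 μ3 : ℝ) :
    IsFiniteMeasure (sigMeas12 h g μ1 μ3) :=
  isFiniteMeasure_withDensity_ofReal
    ((hint.comp_neg.const_mul _).add (gint.const_mul _)).hasFiniteIntegral

end Resolvent

theorem MeasureTheory.MeasurePreserving.withDensity_of_comp_eq {α : Type*} [MeasurableSpace α]
    {μ : Measure α} {e : α ≃ᵐ α} (he : MeasurePreserving e μ μ) {f : α → ℝ≥0∞}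
    (hf : ∀ x, f (e x) = f x) : MeasurePreserving e (μ.withDensity f) (μ.withDensity f) := by
  refine ⟨e.measurable, Measure.ext fun s hs => ?_⟩
  rw [Measure.map_apply e.measurable hs, withDensity_apply _ (e.measurable hs),
    withDensity_apply _ hs, ← he.setLIntegral_comp_preimage_emb e.measurableEmbedding f s]
  simp only [hf]

section Symmetry

theorem measurePreserving_neg_rhoMeas (h g : ℝ → ℝ) :
    MeasurePreserving (MeasurableEquiv.neg ℝ) (rhoMeas h g) (rhoMeas h g) := by
  rw [rhoMeas]
  set F := Ffun h g
  have hdens : MeasurePreserving (MeasurableEquiv.neg ℝ)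
      (volume.withDensity fun t => ENNReal.ofReal (F t + F (-t) + conv F (fun s => F (-s)) t))
      (volume.withDensity fun t => ENNReal.ofReal (F t + F (-t) + conv F (fun s => F (-s)) t)) :=
    (Measure.measurePreserving_neg volume).withDensity_of_comp_eq fun t => by
      simp only [MeasurableEquiv.neg_apply, neg_neg, conv_neg, conv_comm (fun s => F (-s)) F]
      ring_nf
  refine ⟨(MeasurableEquiv.neg ℝ).measurable, ?_⟩
  rw [Measure.map_add _ _ (MeasurableEquiv.neg ℝ).measurable, hdens.map_eq,
    Measure.map_dirac' (MeasurableEquiv.neg ℝ).measurable]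
  simp

variable {h g : ℝ → ℝ}

theorem nu1_eq_nu2 {ε μ : ℝ} (hgh : ∀ t, g t = h (t - ε)) : nu1 h g μ μ = nu2 h g μ μ := by
  have : ∫ t, g t = ∫ t, h t := by simp only [hgh, integral_sub_right_eq_self]
  rw [nu1, nu2, this]

theorem measurePreserving_subLeft_sigMeas12 {ε μ1 μ3 : ℝ} (hgh : ∀ t, g t = h (t - ε))
    (hν : nu1 h g μ1 μ3 = nu2 h g μ1 μ3) :
    MeasurePreserving (MeasurableEquiv.subLeft ε) (sigMeas12 h g μ1 μ3) (sigMeas12 h g μ1 μ3) :=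
  (Measure.measurePreserving_sub_left volume ε).withDensity_of_comp_eq fun t => by
    change ENNReal.ofReal (_ * h (-(ε - t)) + _ * g (ε - t)) = _
    rw [hgh, hgh, hν, sub_sub_cancel_left, neg_sub, add_comm]

theorem integral_integral_neg_eq_add {ρ σ : Measure ℝ} {ε : ℝ}
    (hρ : MeasurePreserving (MeasurableEquiv.neg ℝ) ρ ρ)
    (hσ : MeasurePreserving (MeasurableEquiv.subLeft ε) σ σ)
    {φ : ℝ → ℝ} (hφ : ∀ x, φ (-x) = φ x) (τ : ℝ) :
    ∫ x, ∫ y, φ (-τ - x - y) ∂σ ∂ρ = ∫ x, ∫ y, φ (τ + ε - x - y) ∂σ ∂ρ := by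
  rw [← hρ.integral_comp']
  refine integral_congr_ae (ae_of_all _ fun x => ?_)
  change ∫ y, φ (-τ - -x - y) ∂σ = _
  rw [← hσ.integral_comp']
  refine integral_congr_ae (ae_of_all _ fun y => ?_)
  change φ (-τ - -x - (ε - y)) = _
  rw [← hφ]
  ring_nf

end Symmetry

section Decay

instance Real.isCountablyGenerated_cocompact : (cocompact ℝ).IsCountablyGenerated := by
  rw [cocompact_eq_atBot_atTop]
  infer_instance

theorem tendsto_integral_comp_sub_cocompact {μ : Measure ℝ} [IsFiniteMeasure μ] {φ : ℝ → ℝ}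
    {C : ℝ} (hφ : Measurable φ) (hC : ∀ x, ‖φ x‖ ≤ C) (h0 : Tendsto φ (cocompact ℝ) (𝓝 0)) :
    Tendsto (fun τ => ∫ x, φ (τ - x) ∂μ) (cocompact ℝ) (𝓝 0) := by
  simpa using tendsto_integral_filter_of_dominated_convergence (fun _ => C)
    (Eventually.of_forall fun τ => (hφ.comp (measurable_const_sub τ)).aestronglyMeasurable)
    (Eventually.of_forall fun τ => ae_of_all _ fun x => hC _)
    (integrable_const C)
    (ae_of_all _ fun x => h0.comp (Homeomorph.subRight x).map_cocompact.le)

theorem tendsto_integral_integral_comp_sub_cocompact {ρ σ : Measure ℝ} [IsFiniteMeasure ρ]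
    [IsFiniteMeasure σ] {φ : ℝ → ℝ} {C : ℝ} (hφ : Measurable φ) (hC : ∀ x, ‖φ x‖ ≤ C)
    (h0 : Tendsto φ (cocompact ℝ) (𝓝 0)) :
    Tendsto (fun τ => ∫ x, ∫ y, φ (τ - x - y) ∂σ ∂ρ) (cocompact ℝ) (𝓝 0) :=
  tendsto_integral_comp_sub_cocompact (C := C * σ.real univ)
    (hφ.comp (measurable_fst.sub measurable_snd)).stronglyMeasurable.integral_prod_right'.measurable
    (fun _ => norm_integral_le_of_norm_le_const (ae_of_all _ fun _ => hC _))
    (tendsto_integral_comp_sub_cocompact hφ hC h0)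

theorem Function.Periodic.eq_of_tendsto_atTop {α : Type*} [TopologicalSpace α] [T2Space α]
    {f : ℝ → α} {c : ℝ} {a : α} (hf : Function.Periodic f c) (hc : 0 < c)
    (h : Tendsto f atTop (𝓝 a)) (x : ℝ) : f x = a := by
  have hx : Tendsto (fun n : ℕ => f (x + n * c)) atTop (𝓝 a) :=
    h.comp (tendsto_atTop_add_const_left _ x (tendsto_natCast_atTop_atTop.atTop_mul_const hc))
  simp only [hf.nat_mul _ x] at hx
  exact tendsto_nhds_unique tendsto_const_nhds hx

end Decay

section Kernel

variable {Δ : ℝ}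

theorem continuous_gamDelta (Δ : ℝ) : Continuous (gamDelta Δ) :=
  (continuous_const.sub (continuous_abs.div_const Δ)).max continuous_const

theorem gamDelta_neg (Δ x : ℝ) : gamDelta Δ (-x) = gamDelta Δ x := by
  simp [gamDelta]

theorem norm_gamDelta_le (hΔ : 0 ≤ Δ) (x : ℝ) : ‖gamDelta Δ x‖ ≤ 1 := by
  rw [gamDelta, Real.norm_of_nonneg (le_max_right _ _)]
  exact max_le (sub_le_self _ (by positivity)) zero_le_one

theorem tendsto_gamDelta_cocompact (hΔ : 0 < Δ) : Tendsto (gamDelta Δ) (cocompact ℝ) (𝓝 0) :=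
  tendsto_const_nhds.congr' <| (tendsto_norm_cocompact_atTop.eventually_ge_atTop Δ).mono
    fun x hx => by
      rw [Real.norm_eq_abs] at hx
      rw [gamDelta, max_eq_right (sub_nonpos.2 ((one_le_div hΔ).2 hx))]

end Kernel

section CrossCorrelation

variable {h g : ℝ → ℝ} {μ1 μ3 : ℝ}

theorem C12_neg_eq_add {ε : ℝ} (hgh : ∀ t, g t = h (t - ε)) (hμ : μ1 = μ3) (Δ τ : ℝ) :
    C12 h g μ1 μ3 Δ (-τ) = C12 h g μ1 μ3 Δ (τ + ε) := by
  subst hμ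
  rw [C12, C12, integral_integral_neg_eq_add (measurePreserving_neg_rhoMeas h g)
    (measurePreserving_subLeft_sigMeas12 hgh (nu1_eq_nu2 hgh)) (gamDelta_neg Δ)]

theorem tendsto_C12_cocompact [IsFiniteMeasure (rhoMeas h g)]
    [IsFiniteMeasure (sigMeas12 h g μ1 μ3)] {Δ : ℝ} (hΔ : 0 < Δ) :
    Tendsto (C12 h g μ1 μ3 Δ) (cocompact ℝ) (𝓝 0) := by
  have := (tendsto_integral_integral_comp_sub_cocompact (ρ := rhoMeas h g)
    (σ := sigMeas12 h g μ1 μ3) (continuous_gamDelta Δ).measurable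
    (norm_gamDelta_le hΔ.le) (tendsto_gamDelta_cocompact hΔ)).const_mul
      (2 / (1 - (∫ t, h t) * ∫ t, g t))
  rwa [mul_zero] at this

end CrossCorrelation

theorem lead_lag_effect_general (h g : ℝ → ℝ)
    (hmeas : Measurable h) (gmeas : Measurable g)
    (hnonneg : ∀ t, 0 ≤ h t) (gnonneg : ∀ t, 0 ≤ g t)
    (hint : Integrable h) (gint : Integrable g)
    (hlt : (∫ t, h t) * (∫ t, g t) < 1)
    (μ1 μ3 : ℝ)
    (ε : ℝ) (hε : 0 < ε) (hgh : ∀ t, g t = h (t - ε)) (hμ : μ1 = μ3) :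
    (∀ Δ : ℝ, 0 < Δ → ∀ τ : ℝ, C12 h g μ1 μ3 Δ (-τ) = C12 h g μ1 μ3 Δ (τ + ε)) ∧
    (∀ Δ : ℝ, 0 < Δ →
      Tendsto (fun τ : ℝ => C12 h g μ1 μ3 Δ τ) atTop (𝓝 0) ∧
      Tendsto (fun τ : ℝ => C12 h g μ1 μ3 Δ τ) atBot (𝓝 0)) ∧
    ((¬ ∀ Δ : ℝ, 0 < Δ → ∀ τ : ℝ, C12 h g μ1 μ3 Δ τ = 0) →
      ∃ Δ : ℝ, 0 < Δ ∧ ∃ τ : ℝ, τ ≠ 0 ∧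
        C12 h g μ1 μ3 Δ τ ≠ C12 h g μ1 μ3 Δ (-τ)) := by
  have := isFiniteMeasure_rhoMeas hmeas gmeas hnonneg gnonneg hint gint hlt
  have := isFiniteMeasure_sigMeas12 hint gint μ1 μ3
  have decay (Δ : ℝ) (hΔ : 0 < Δ) : Tendsto (C12 h g μ1 μ3 Δ) (cocompact ℝ) (𝓝 0) :=
    tendsto_C12_cocompact hΔ
  refine ⟨fun Δ _ => C12_neg_eq_add hgh hμ Δ, fun Δ hΔ =>
    ⟨(decay Δ hΔ).mono_left atTop_le_cocompact, (decay Δ hΔ).mono_left atBot_le_cocompact⟩, ?_⟩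
  intro hne
  by_contra! heven
  refine hne fun Δ hΔ => ?_
  have hperiodic : Function.Periodic (C12 h g μ1 μ3 Δ) ε := fun τ => by
    rcases eq_or_ne τ 0 with rfl | hτ
    · rw [zero_add, ← neg_zero, C12_neg_eq_add hgh hμ, zero_add]
    · rw [← C12_neg_eq_add hgh hμ, heven Δ hΔ τ hτ]
  exact hperiodic.eq_of_tendsto_atTop hε ((decay Δ hΔ).mono_left atTop_le_cocompact)

/-- **The lead-lag effect.** If `g(t) = h(t−ε)` with `ε > 0` and `μ₁ = μ₃`, then
`C₁₂(Δ,−τ) = C₁₂(Δ,τ+ε)` for all `Δ > 0`, `τ ∈ ℝ`; moreover `C₁₂(Δ,τ) → 0` as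
`τ → ±∞`; consequently, unless `C₁₂` vanishes identically, there exist `Δ > 0` and
`τ ≠ 0` with `C₁₂(Δ,τ) ≠ C₁₂(Δ,−τ)`. -/
theorem lead_lag_effect (h g : ℝ → ℝ)
    (hmeas : Measurable h) (gmeas : Measurable g)
    (hnonneg : ∀ t, 0 ≤ h t) (gnonneg : ∀ t, 0 ≤ g t)
    (hint : Integrable h) (gint : Integrable g)
    (hvan : ∀ t < (0 : ℝ), h t = 0) (gvan : ∀ t < (0 : ℝ), g t = 0)
    (hlt : (∫ t, h t) * (∫ t, g t) < 1)
    (μ1 μ3 : ℝ) (hμ1 : 0 ≤ μ1) (hμ3 : 0 ≤ μ3)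
    (ε : ℝ) (hε : 0 < ε) (hgh : ∀ t, g t = h (t - ε)) (hμ : μ1 = μ3) :
    (∀ Δ : ℝ, 0 < Δ → ∀ τ : ℝ, C12 h g μ1 μ3 Δ (-τ) = C12 h g μ1 μ3 Δ (τ + ε)) ∧
    (∀ Δ : ℝ, 0 < Δ →
      Tendsto (fun τ : ℝ => C12 h g μ1 μ3 Δ τ) atTop (𝓝 0) ∧
      Tendsto (fun τ : ℝ => C12 h g μ1 μ3 Δ τ) atBot (𝓝 0)) ∧
    ((¬ ∀ Δ : ℝ, 0 < Δ → ∀ τ : ℝ, C12 h g μ1 μ3 Δ τ = 0) →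
      ∃ Δ : ℝ, 0 < Δ ∧ ∃ τ : ℝ, τ ≠ 0 ∧
        C12 h g μ1 μ3 Δ τ ≠ C12 h g μ1 μ3 Δ (-τ)) :=
  lead_lag_effect_general h g hmeas gmeas hnonneg gnonneg hint gint hlt μ1 μ3 ε hε hgh hμ
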